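/- Let R be a ring, a ∈ R left cancellative, and aR = y_nR ⊊ … ⊊ y_1R ⊊ R a chain as above with y_{i-1} x_i = y_i. If y_1',…,y_{n-1}' are also left cancellative with y_i'R = y_iR, y_0' = 1, y_n' = a, and x_i' are defined by y'_{i-1} x_i' = y_i', then there exist units ε_1,…,ε_{n-1} ∈ U(R) such that x_1' = x_1 ε_1, x_i' = ε_{i-1}^{-1} x_i ε_i for 2 ≤ i ≤ n−1, and x_n' = ε_{n-1}^{-1} x_n. -/

import Mathlib

/-!
If `y` and `y'` are left cancellative and generate the same principal right ideal, then
`y' = y * u` for a unit `u`: writing `y' = y c` and `y = y' d`, cancelling `y` from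
`y = y c d` and `y'` from `y' = y' d c` shows that `c` and `d` are mutually inverse.
Hence `y'_i = y_i ε_i` with `ε_0 = ε_n = 1`, and cancelling `y_{i-1}` from
`y_{i-1} ε_{i-1} x'_i = y_i ε_i = y_{i-1} x_i ε_i` gives `x'_i = ε_{i-1}⁻¹ x_i ε_i`.
-/

open Submodule MulOpposite

theorem mem_span_op_singleton_iff {R : Type*} [Semiring R] {y z : R} :
    z ∈ span Rᵐᵒᵖ {y} ↔ ∃ r, y * r = z := by
  simp only [mem_span_singleton, smul_eq_mul_unop]
  exact ⟨fun ⟨r, h⟩ => ⟨r.unop, h⟩, fun ⟨r, h⟩ => ⟨op r, h⟩⟩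

theorem IsLeftRegular.exists_unit_eq_mul_of_span_op_eq {R : Type*} [Semiring R] {y y' : R}
    (hy : IsLeftRegular y) (hy' : IsLeftRegular y')
    (h : span Rᵐᵒᵖ {y'} = span Rᵐᵒᵖ {y}) : ∃ u : Rˣ, y' = y * u := by
  obtain ⟨c, hc⟩ := mem_span_op_singleton_iff.mp (h ▸ mem_span_singleton_self y')
  obtain ⟨d, hd⟩ := mem_span_op_singleton_iff.mp (h.symm ▸ mem_span_singleton_self y)
  have hcd : c * d = 1 := hy (show y * (c * d) = y * 1 by rw [← mul_assoc, hc, hd, mul_one])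
  have hdc : d * c = 1 := hy' (show y' * (d * c) = y' * 1 by rw [← mul_assoc, hd, hc, mul_one])
  exact ⟨⟨c, d, hcd, hdc⟩, hc.symm⟩

theorem IsLeftRegular.eq_inv_mul_mul_of_mul_eq {R : Type*} [Monoid R] {y x x' z : R}
    {u v : Rˣ} (hy : IsLeftRegular y) (hx : y * x = z) (hx' : y * u * x' = z * v) :
    x' = ↑u⁻¹ * x * v := by
  have hux : u * x' = x * v :=
    hy (show y * (u * x') = y * (x * v) by rw [← mul_assoc, hx', ← hx, mul_assoc])
  rw [mul_assoc, ← hux, Units.inv_mul_cancel_left]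

/-- The units are encoded as `ε : ℕ → Rˣ` with `ε 0 = 1` and `ε n = 1`, so that the single
formula `x'_i = ε_{i-1}⁻¹ x_i ε_i` (`1 ≤ i ≤ n`) also covers `x'_1 = x_1 ε_1` and
`x'_n = ε_{n-1}⁻¹ x_n`. -/
theorem stmt_3 {R : Type*} [Ring R] (n : ℕ) (a : R)
    (y x y' x' : ℕ → R)
    (hy0 : y 0 = 1) (hyn : y n = a)
    (hy0' : y' 0 = 1) (hyn' : y' n = a)
    (hcanc : ∀ i, 1 ≤ i → i ≤ n - 1 → (y i ≠ 0 ∧ ∀ b c : R, y i * b = y i * c → b = c))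
    (hcanc' : ∀ i, 1 ≤ i → i ≤ n - 1 → (y' i ≠ 0 ∧ ∀ b c : R, y' i * b = y' i * c → b = c))
    (heq : ∀ i, 1 ≤ i → i ≤ n - 1 →
      Submodule.span Rᵐᵒᵖ {y' i} = Submodule.span Rᵐᵒᵖ {y i})
    (hx : ∀ i, 1 ≤ i → i ≤ n → y (i - 1) * x i = y i)
    (hx' : ∀ i, 1 ≤ i → i ≤ n → y' (i - 1) * x' i = y' i) :
    ∃ ε : ℕ → Rˣ, ε 0 = 1 ∧ ε n = 1 ∧
      ∀ i, 1 ≤ i → i ≤ n → x' i = ((ε (i - 1))⁻¹ : Rˣ) * x i * (ε i : R) := by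
  have hreg : ∀ j, j ≤ n - 1 → IsLeftRegular (y j) := by
    rintro (_ | j) hj
    · exact hy0 ▸ isRegular_one.left
    · exact (hcanc (j + 1) (by omega) hj).2
  have hunit : ∀ i, ∃ u : Rˣ, (i ≤ n → y' i = y i * u) ∧ (i = 0 ∨ n ≤ i → u = 1) := by
    intro i
    by_cases hi : i = 0 ∨ n ≤ i
    · refine ⟨1, fun hin => ?_, fun _ => rfl⟩
      obtain rfl | rfl : i = 0 ∨ i = n := by omega
      · simp [hy0, hy0']
      · simp [hyn, hyn']
    · obtain ⟨u, hu⟩ := (hreg i (by omega)).exists_unit_eq_mul_of_span_op_eq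
        (hcanc' i (by omega) (by omega)).2 (heq i (by omega) (by omega))
      exact ⟨u, fun _ => hu, fun h => absurd h hi⟩
  choose ε hε hε1 using hunit
  refine ⟨ε, hε1 0 (.inl rfl), hε1 n (.inr le_rfl), fun i hi1 hin => ?_⟩
  apply (hreg (i - 1) (by omega)).eq_inv_mul_mul_of_mul_eq (hx i hi1 hin)
  rw [← hε (i - 1) (by omega), ← hε i hin]
  exact hx' i hi1 hin
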